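/- For every integer n ≥ 2, √(2πn) · (1 − 1/n) ≤ n·|Dₙ|/|D_{n−1}| ≤ √(2πn). (The middle quantity is the first intrinsic volume V₁(Dₙ) of the unit ball.) -/

import Mathlib

/-!
With `x = n / 2`, the formula `|Dₖ| = π^{k/2}/Γ(k/2+1)` and `Γ(x+1) = xΓ(x)` give
`n|Dₙ|/|D_{n-1}| = 2√π · Γ(x+1/2)/Γ(x)`. Log-convexity of `Γ` on `[x, x+1]` yields
`Γ(x+1/2) ≤ Γ(x)√x`, which is the upper bound; the same inequality at `x + 1/2` gives
`x/√(x+1/2) ≤ Γ(x+1/2)/Γ(x)`, and this dominates `√x (1 - 1/(2x))`.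
-/

open MeasureTheory

/-- The Lebesgue volume `|Dₖ| = π^{k/2}/Γ(k/2+1)` of the closed Euclidean unit ball
in `ℝᵏ`. -/
noncomputable def unitBallVolume (k : ℕ) : ℝ :=
  (volume (Metric.closedBall (0 : EuclideanSpace ℝ (Fin k)) 1)).toReal

namespace Real

theorem Gamma_add_half_le_Gamma_mul_sqrt {x : ℝ} (hx : 0 < x) :
    Gamma (x + 1 / 2) ≤ Gamma x * √x := by
  have hΓ := (Gamma_pos_of_pos hx).le
  have h := Gamma_mul_add_mul_le_rpow_Gamma_mul_rpow_Gamma hx (by linarith : 0 < x + 1)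
    (by norm_num : (0 : ℝ) < 1 / 2) (by norm_num : (0 : ℝ) < 1 / 2) (by norm_num)
  calc Gamma (x + 1 / 2) = Gamma (1 / 2 * x + 1 / 2 * (x + 1)) := by ring_nf
    _ ≤ Gamma x ^ (1 / 2 : ℝ) * Gamma (x + 1) ^ (1 / 2 : ℝ) := h
    _ = √(Gamma x ^ 2 * x) := by
      rw [← mul_rpow hΓ (Gamma_pos_of_pos (by linarith)).le, ← sqrt_eq_rpow,
        Gamma_add_one hx.ne']
      ring_nf
    _ = Gamma x * √x := by rw [sqrt_mul (sq_nonneg _), sqrt_sq hΓ]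

theorem Gamma_add_half_div_Gamma_le_sqrt {x : ℝ} (hx : 0 < x) :
    Gamma (x + 1 / 2) / Gamma x ≤ √x := by
  rw [div_le_iff₀ (Gamma_pos_of_pos hx), mul_comm]
  exact Gamma_add_half_le_Gamma_mul_sqrt hx

theorem div_sqrt_le_Gamma_add_half_div_Gamma {x : ℝ} (hx : 0 < x) :
    x / √(x + 1 / 2) ≤ Gamma (x + 1 / 2) / Gamma x := by
  have h := Gamma_add_half_le_Gamma_mul_sqrt (by linarith : 0 < x + 1 / 2)
  rw [add_assoc, add_halves, Gamma_add_one hx.ne'] at h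
  rwa [div_le_div_iff₀ (sqrt_pos.2 (by linarith)) (Gamma_pos_of_pos hx)]

theorem sqrt_mul_one_sub_le_div_sqrt {x : ℝ} (hx : 0 < x) :
    √x * (1 - 1 / (2 * x)) ≤ x / √(x + 1 / 2) := by
  have hs : 0 < √x := sqrt_pos.2 hx
  have ht : 0 < √(x + 1 / 2) := sqrt_pos.2 (by linarith)
  have hs2 := sq_sqrt hx.le
  have ht2 := sq_sqrt (by linarith : (0 : ℝ) ≤ x + 1 / 2)
  have hlhs : √x * (1 - 1 / (2 * x)) = (x - 1 / 2) / √x := by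
    field_simp
    rw [hs2]
  rw [hlhs, div_le_div_iff₀ hs ht]
  rcases le_total x (1 / 2) with h | h
  · nlinarith
  · have hsq : ((x - 1 / 2) * √(x + 1 / 2)) ^ 2 ≤ (x * √x) ^ 2 := by
      rw [mul_pow, mul_pow, hs2, ht2]; nlinarith
    exact (pow_le_pow_iff_left₀ (mul_nonneg (by linarith) ht.le) (by positivity)
      two_ne_zero).1 hsq

end Real

theorem unitBallVolume_eq {k : ℕ} (hk : 0 < k) :
    unitBallVolume k = √Real.pi ^ k / Real.Gamma (k / 2 + 1) := by
  have : Nonempty (Fin k) := ⟨⟨0, hk⟩⟩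
  rw [unitBallVolume, EuclideanSpace.volume_closedBall, Fintype.card_fin, ENNReal.ofReal_one,
    one_pow, one_mul, ENNReal.toReal_ofReal (by positivity)]

theorem natCast_mul_unitBallVolume_div_unitBallVolume_sub_one {n : ℕ} (hn : 2 ≤ n) :
    n * unitBallVolume n / unitBallVolume (n - 1)
      = 2 * √Real.pi * (Real.Gamma (n / 2 + 1 / 2) / Real.Gamma (n / 2)) := by
  obtain ⟨m, rfl⟩ : ∃ m, n = m + 1 := ⟨n - 1, by omega⟩
  rw [unitBallVolume_eq (by omega), Nat.add_sub_cancel, unitBallVolume_eq (by omega),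
    Real.Gamma_add_one (by positivity), pow_succ]
  push_cast
  rw [show ((m : ℝ) + 1) / 2 + 1 / 2 = m / 2 + 1 by ring]
  have := Real.Gamma_pos_of_pos (by positivity : (0 : ℝ) < (m + 1) / 2)
  have := Real.Gamma_pos_of_pos (by positivity : (0 : ℝ) < m / 2 + 1)
  field_simp

/-- For every `n ≥ 2`,
`√(2πn) (1 - 1/n) ≤ n·|Dₙ|/|D_{n-1}| ≤ √(2πn)`; the middle quantity is the first
intrinsic volume `V₁(Dₙ)` of the unit ball. -/
theorem stmt13 (n : ℕ) (hn : 2 ≤ n) :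
    Real.sqrt (2 * Real.pi * n) * (1 - 1 / (n : ℝ))
      ≤ (n : ℝ) * unitBallVolume n / unitBallVolume (n - 1)
    ∧ (n : ℝ) * unitBallVolume n / unitBallVolume (n - 1)
      ≤ Real.sqrt (2 * Real.pi * n) := by
  rw [natCast_mul_unitBallVolume_div_unitBallVolume_sub_one hn]
  set x : ℝ := n / 2 with hx_def
  have hx : 0 < x := by positivity
  have hsqrt : √(2 * Real.pi * n) = 2 * √Real.pi * √x := by
    rw [show 2 * Real.pi * n = 2 ^ 2 * (Real.pi * x) by rw [hx_def]; ring,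
      Real.sqrt_mul (by positivity), Real.sqrt_sq zero_le_two, Real.sqrt_mul Real.pi_pos.le,
      mul_assoc]
  have hinv : (1 : ℝ) / n = 1 / (2 * x) := by rw [hx_def]; ring
  rw [hsqrt, hinv, mul_assoc]
  have hc : 0 ≤ 2 * √Real.pi := by positivity
  exact ⟨mul_le_mul_of_nonneg_left ((Real.sqrt_mul_one_sub_le_div_sqrt hx).trans
      (Real.div_sqrt_le_Gamma_add_half_div_Gamma hx)) hc,
    mul_le_mul_of_nonneg_left (Real.Gamma_add_half_div_Gamma_le_sqrt hx) hc⟩
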